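/- Chained mean oscillation estimate: Let Ω ⊂ ℝⁿ be a nozzle domain as above, and a < b reals. Then |P_{(a-1,a)}(φ) - P_{(b,b+1)}(φ)| ≤ C ∫_{Ω_{(a-1,b+1)}} |∇φ| dx for all φ ∈ W^{1,1}_loc(Ω), where C depends only on Ω (not on a, b, φ). -/

import Mathlib

/-!
On each vertical line `{y} × ℝ` the fundamental theorem of calculus bounds `|φ (y, s) - φ (y, t)|`
by the integral of `|∂ₜφ| ≤ ‖Dφ‖` between `s` and `t`. Pairing `s ∈ (a, a + L)` with
`t = s + (b - a)` and integrating over `s` and then over `y ∈ D` (Fubini) bounds the difference of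
the integrals over the two slabs `D × (a, a + L)`, `D × (b, b + L)` by `L ∫_{D × (a, b + L)} ‖Dφ‖`.
Dividing by the slab volume `μ D * L` gives the constant `1 / μ D`.
-/

open Set MeasureTheory Bornology

section Interval

variable {f f' : ℝ → ℝ}

lemma abs_sub_le_setIntegral_Ioo_abs_deriv (hf : ∀ x, HasDerivAt f (f' x) x)
    (hf' : Continuous f') {s t : ℝ} (hst : s ≤ t) :
    |f s - f t| ≤ ∫ r in Ioo s t, |f' r| := by
  have ftc : ∫ r in s..t, f' r = f t - f s :=
    intervalIntegral.integral_eq_sub_of_hasDerivAt (fun x _ => hf x)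
      (hf'.intervalIntegrable s t)
  calc |f s - f t| = |∫ r in s..t, f' r| := by rw [ftc, abs_sub_comm]
    _ ≤ ∫ r in s..t, |f' r| := intervalIntegral.abs_integral_le_integral_abs hst
    _ = ∫ r in Ioo s t, |f' r| := by
      rw [intervalIntegral.integral_of_le hst, integral_Ioc_eq_integral_Ioo]

lemma abs_setIntegral_Ioo_sub_setIntegral_Ioo_le (hf : ∀ x, HasDerivAt f (f' x) x)
    (hf' : Continuous f') {a b L : ℝ} (hab : a ≤ b) (hL : 0 ≤ L) :
    |(∫ x in Ioo a (a + L), f x) - ∫ x in Ioo b (b + L), f x|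
      ≤ L * ∫ r in Ioo a (b + L), |f' r| := by
  have hfc : Continuous f := continuous_iff_continuousAt.2 fun x => (hf x).continuousAt
  have shift : ∀ c, ∫ x in Ioo c (c + L), f x = ∫ u in (0 : ℝ)..L, f (u + c) := by
    intro c
    rw [intervalIntegral.integral_comp_add_right f c, zero_add, add_comm L,
      intervalIntegral.integral_of_le (by linarith), integral_Ioc_eq_integral_Ioo]
  have pointwise : ∀ u ∈ uIoc 0 L, ‖f (u + a) - f (u + b)‖ ≤ ∫ r in Ioo a (b + L), |f' r| := by
    intro u hu
    rw [uIoc_of_le hL] at hu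
    rw [Real.norm_eq_abs]
    refine (abs_sub_le_setIntegral_Ioo_abs_deriv hf hf' (by linarith)).trans ?_
    refine setIntegral_mono_set ((hf'.abs.integrableOn_Icc).mono_set Ioo_subset_Icc_self)
      (Filter.Eventually.of_forall fun r => abs_nonneg _) (Ioo_subset_Ioo ?_ ?_).eventuallyLE
    all_goals linarith [hu.1, hu.2]
  have shifted_integrable : ∀ c, IntervalIntegrable (fun u => f (u + c)) volume 0 L :=
    fun c => (hfc.comp (continuous_add_const c)).intervalIntegrable 0 L
  rw [shift, shift, ← intervalIntegral.integral_sub (shifted_integrable a)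
    (shifted_integrable b), ← Real.norm_eq_abs, mul_comm]
  simpa [abs_of_nonneg hL] using intervalIntegral.norm_integral_le_of_norm_le_const pointwise

end Interval

section Slabs

variable {E : Type*} [NormedAddCommGroup E] [NormedSpace ℝ E] {φ : E × ℝ → ℝ} {a b L : ℝ}

lemma ContinuousLinearMap.norm_apply_zero_one_le {F : Type*} [NormedAddCommGroup F]
    [NormedSpace ℝ F] (T : E × ℝ →L[ℝ] F) : ‖T (0, 1)‖ ≤ ‖T‖ := by
  simpa [Prod.norm_def] using T.le_opNorm (0, 1)

lemma hasDerivAt_fderiv_apply_zero_one (hφ : Differentiable ℝ φ) (y : E)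
    (t : ℝ) : HasDerivAt (fun s => φ (y, s)) (fderiv ℝ φ (y, t) (0, 1)) t :=
  (hφ (y, t)).hasFDerivAt.comp_hasDerivAt t ((hasDerivAt_const t y).prodMk (hasDerivAt_id t))

lemma abs_setIntegral_Ioo_sub_setIntegral_Ioo_slice_le (hφ : ContDiff ℝ 1 φ) (y : E)
    (hab : a ≤ b) (hL : 0 ≤ L) :
    |(∫ t in Ioo a (a + L), φ (y, t)) - ∫ t in Ioo b (b + L), φ (y, t)|
      ≤ L * ∫ t in Ioo a (b + L), ‖fderiv ℝ φ (y, t)‖ := by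
  have hDφ : Continuous (fun t => fderiv ℝ φ (y, t)) :=
    (hφ.continuous_fderiv one_ne_zero).comp (continuous_const.prodMk continuous_id)
  refine (abs_setIntegral_Ioo_sub_setIntegral_Ioo_le
    (hasDerivAt_fderiv_apply_zero_one (hφ.differentiable one_ne_zero) y)
    (hDφ.clm_apply continuous_const) hab hL).trans ?_
  refine mul_le_mul_of_nonneg_left (setIntegral_mono_on ?_ ?_ measurableSet_Ioo fun t _ =>
    (fderiv ℝ φ (y, t)).norm_apply_zero_one_le) hL
  · exact (hDφ.clm_apply continuous_const).abs.integrableOn_Icc.mono_set Ioo_subset_Icc_self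
  · exact hDφ.norm.integrableOn_Icc.mono_set Ioo_subset_Icc_self

variable [FiniteDimensional ℝ E] [MeasurableSpace E] [BorelSpace E] {μ : Measure E}
  [IsFiniteMeasureOnCompacts μ] {D : Set E}

lemma integrableOn_prod_Ioo_of_continuous {f : E × ℝ → ℝ} (hf : Continuous f)
    (hD : IsBounded D) (c d : ℝ) : IntegrableOn f (D ×ˢ Ioo c d) (μ.prod volume) :=
  hf.continuousOn.integrableOn_compact (hD.prod (Metric.isBounded_Ioo c d)).isCompact_closure
    |>.mono_set subset_closure

lemma setIntegral_prod_Ioo_of_continuous {f : E × ℝ → ℝ} (hf : Continuous f)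
    (hD : IsBounded D) (c d : ℝ) :
    ∫ x in D ×ˢ Ioo c d, f x ∂μ.prod volume = ∫ y in D, (∫ t in Ioo c d, f (y, t)) ∂μ :=
  setIntegral_prod f (integrableOn_prod_Ioo_of_continuous hf hD c d)

lemma integrableOn_setIntegral_Ioo_of_continuous {f : E × ℝ → ℝ} (hf : Continuous f)
    (hD : IsBounded D) (c d : ℝ) :
    IntegrableOn (fun y => ∫ t in Ioo c d, f (y, t)) D μ := by
  have h := integrableOn_prod_Ioo_of_continuous (μ := μ) hf hD c d
  rw [IntegrableOn, ← Measure.prod_restrict] at h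
  exact h.integral_prod_left

lemma abs_setIntegral_prod_Ioo_sub_setIntegral_prod_Ioo_le (hφ : ContDiff ℝ 1 φ)
    (hD : IsBounded D) (hab : a ≤ b) (hL : 0 ≤ L) :
    |(∫ x in D ×ˢ Ioo a (a + L), φ x ∂μ.prod volume)
        - ∫ x in D ×ˢ Ioo b (b + L), φ x ∂μ.prod volume|
      ≤ L * ∫ x in D ×ˢ Ioo a (b + L), ‖fderiv ℝ φ x‖ ∂μ.prod volume := by
  have hφc := hφ.continuous
  have hDφ := (hφ.continuous_fderiv one_ne_zero).norm
  rw [setIntegral_prod_Ioo_of_continuous hφc hD, setIntegral_prod_Ioo_of_continuous hφc hD,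
    setIntegral_prod_Ioo_of_continuous hDφ hD, ← integral_const_mul,
    ← integral_sub (integrableOn_setIntegral_Ioo_of_continuous hφc hD _ _)
      (integrableOn_setIntegral_Ioo_of_continuous hφc hD _ _), ← Real.norm_eq_abs]
  exact norm_integral_le_of_norm_le
    ((integrableOn_setIntegral_Ioo_of_continuous hDφ hD _ _).const_mul L)
    (Filter.Eventually.of_forall fun y =>
      abs_setIntegral_Ioo_sub_setIntegral_Ioo_slice_le hφ y hab hL)

lemma abs_average_prod_Ioo_sub_average_prod_Ioo_le (hφ : ContDiff ℝ 1 φ)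
    (hD : IsBounded D) (hab : a ≤ b) (hL : 0 ≤ L) :
    |(∫ x in D ×ˢ Ioo a (a + L), φ x ∂μ.prod volume)
          / (μ.prod volume (D ×ˢ Ioo a (a + L))).toReal
        - (∫ x in D ×ˢ Ioo b (b + L), φ x ∂μ.prod volume)
          / (μ.prod volume (D ×ˢ Ioo b (b + L))).toReal|
      ≤ (μ D).toReal⁻¹ * ∫ x in D ×ˢ Ioo a (b + L), ‖fderiv ℝ φ x‖ ∂μ.prod volume := by
  have slab_volume : ∀ c, (μ.prod volume (D ×ˢ Ioo c (c + L))).toReal = (μ D).toReal * L := by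
    intro c
    rw [Measure.prod_prod, Real.volume_Ioo, add_sub_cancel_left, ENNReal.toReal_mul,
      ENNReal.toReal_ofReal hL]
  rw [slab_volume, slab_volume, div_sub_div_same, abs_div,
    abs_of_nonneg (mul_nonneg ENNReal.toReal_nonneg hL), mul_comm (μ D).toReal, ← div_div,
    div_eq_inv_mul]
  gcongr
  exact div_le_of_le_mul₀ hL (setIntegral_nonneg_of_ae (Filter.Eventually.of_forall
    fun x => norm_nonneg _))
    ((abs_setIntegral_prod_Ioo_sub_setIntegral_prod_Ioo_le hφ hD hab hL).trans_eq (mul_comm _ _))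

end Slabs

theorem stmt_10_general {n : ℕ} (D : Set (EuclideanSpace ℝ (Fin n)))
    (hDo : IsOpen D) (hDb : Bornology.IsBounded D) (hDne : D.Nonempty) :
    ∃ C : ℝ, 0 < C ∧ ∀ a b : ℝ, a < b →
      ∀ φ : EuclideanSpace ℝ (Fin n) × ℝ → ℝ, ContDiff ℝ 1 φ →
      |(∫ x in D ×ˢ Ioo (a - 1) a, φ x) / (volume (D ×ˢ Ioo (a - 1) a)).toReal
        - (∫ x in D ×ˢ Ioo b (b + 1), φ x) /
            (volume (D ×ˢ Ioo b (b + 1))).toReal|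
        ≤ C * ∫ x in D ×ˢ Ioo (a - 1) (b + 1), ‖fderiv ℝ φ x‖ := by
  refine ⟨(volume D).toReal⁻¹, inv_pos.2 (ENNReal.toReal_pos
    (hDo.measure_pos volume hDne).ne' hDb.measure_lt_top.ne), fun a b hab φ hφ => ?_⟩
  have h := abs_average_prod_Ioo_sub_average_prod_Ioo_le (μ := volume) (a := a - 1) (L := 1)
    hφ hDb (by linarith) zero_le_one
  rwa [sub_add_cancel] at h

/-- Chained mean oscillation estimate (model case `Ω = D × ℝ`, `D ⊂ ℝ^{n-1}`
a bounded Lipschitz domain): there is a constant `C`, depending only on the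
nozzle (not on `a`, `b`, `φ`), such that for all `a < b` and all `C¹`
functions `φ`,
`|P_{(a-1,a)}(φ) - P_{(b,b+1)}(φ)| ≤ C ∫_{Ω_{(a-1,b+1)}} |∇φ| dx`,
where `P_{(s,t)}(φ)` is the average of `φ` over `D × (s,t)`. -/
theorem stmt_10 {n : ℕ} (D : Set (EuclideanSpace ℝ (Fin n)))
    (hDo : IsOpen D) (hDb : Bornology.IsBounded D) (hDne : D.Nonempty)
    (hDc : Convex ℝ D) :
    ∃ C : ℝ, 0 < C ∧ ∀ a b : ℝ, a < b →
      ∀ φ : EuclideanSpace ℝ (Fin n) × ℝ → ℝ, ContDiff ℝ 1 φ →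
      |(∫ x in D ×ˢ Ioo (a - 1) a, φ x) / (volume (D ×ˢ Ioo (a - 1) a)).toReal
        - (∫ x in D ×ˢ Ioo b (b + 1), φ x) /
            (volume (D ×ˢ Ioo b (b + 1))).toReal|
        ≤ C * ∫ x in D ×ˢ Ioo (a - 1) (b + 1), ‖fderiv ℝ φ x‖ :=
  stmt_10_general D hDo hDb hDne
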